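/- Suppose 0 < h21 ≤ h22 (weak cross link) and h11/h21 ≤ √p2/(M·√p1). Then the maximum of f(w1,w2) over the feasible box 0 < w1 ≤ W1, 0 < w2 ≤ W2 equals h11·W1, and it is attained at (w1,w2) = ( W1 , (M·h11/h21)·W1 ). -/
import Mathlib


/-- The minimum Euclidean half-distance at receiver 1: the minimum of
`|h11*w1*n - h21*w2*m|` over integer pairs `(m,n) != (0,0)` with
`|m| <= M-1` and `|n| <= M-1`. -/
noncomputable def minDist1 (M : ℕ) (h11 h21 w1 w2 : ℝ) : ℝ :=
  sInf {d : ℝ | ∃ m n : ℤ, (m, n) ≠ (0, 0) ∧ |m| ≤ (M : ℤ) - 1 ∧ |n| ≤ (M : ℤ) - 1 ∧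
      d = |h11 * w1 * n - h21 * w2 * m|}

/-- The smaller of the two receivers' minimum Euclidean half-distances. -/
noncomputable def f (M : ℕ) (h11 h21 h22 w1 w2 : ℝ) : ℝ :=
  min (minDist1 M h11 h21 w1 w2) (h22 * w2)

lemma mem_dist_set (M : ℕ) (hM : 2 ≤ M) (h11 h21 w1 w2 : ℝ) (h : 0 ≤ h11 * w1) :
    h11 * w1 ∈ {d : ℝ | ∃ m n : ℤ, (m, n) ≠ (0, 0) ∧ |m| ≤ (M : ℤ) - 1 ∧ |n| ≤ (M : ℤ) - 1 ∧
      d = |h11 * w1 * n - h21 * w2 * m|} := by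
  refine ⟨0, 1, by simp, by simp; omega, by simp; omega, ?_⟩
  push_cast
  rw [mul_one, mul_zero, sub_zero, abs_of_nonneg h]

lemma minDist1_bddBelow (M : ℕ) (h11 h21 w1 w2 : ℝ) :
    BddBelow {d : ℝ | ∃ m n : ℤ, (m, n) ≠ (0, 0) ∧ |m| ≤ (M : ℤ) - 1 ∧ |n| ≤ (M : ℤ) - 1 ∧
      d = |h11 * w1 * n - h21 * w2 * m|} := by
  refine ⟨0, ?_⟩
  rintro d ⟨m, n, _, _, _, rfl⟩
  exact abs_nonneg _

lemma minDist1_le (M : ℕ) (hM : 2 ≤ M) (h11 h21 w1 w2 : ℝ) (h : 0 ≤ h11 * w1) :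
    minDist1 M h11 h21 w1 w2 ≤ h11 * w1 :=
  csInf_le (minDist1_bddBelow M h11 h21 w1 w2) (mem_dist_set M hM h11 h21 w1 w2 h)

/-- Weak cross link (`h21 ≤ h22`) with `h11/h21 ≤ √p2/(M·√p1)`: the maximum of
`f` over the feasible box equals `h11·W1`, attained at `(W1, (M·h11/h21)·W1)`. -/
theorem weak_cross_link_case1 (M : ℕ) (hM : 2 ≤ M) (hMe : Even M)
    (h11 h21 h22 p1 p2 : ℝ)
    (h11p : 0 < h11) (h21p : 0 < h21) (h22p : 0 < h22)
    (hp1 : 0 < p1) (hp2 : 0 < p2)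
    (W1 W2 : ℝ)
    (hW1 : W1 = Real.sqrt (3 * p1 / ((M : ℝ) ^ 2 - 1)))
    (hW2 : W2 = Real.sqrt (3 * p2 / ((M : ℝ) ^ 2 - 1)))
    (hweak : h21 ≤ h22)
    (hratio : h11 / h21 ≤ Real.sqrt p2 / ((M : ℝ) * Real.sqrt p1)) :
    IsGreatest {v : ℝ | ∃ w1 w2 : ℝ, 0 < w1 ∧ w1 ≤ W1 ∧ 0 < w2 ∧ w2 ≤ W2 ∧
        v = f M h11 h21 h22 w1 w2} (h11 * W1) ∧
    ((0 : ℝ) < W1 ∧ W1 ≤ W1 ∧ 0 < (M : ℝ) * h11 / h21 * W1 ∧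
      (M : ℝ) * h11 / h21 * W1 ≤ W2) ∧
    f M h11 h21 h22 W1 ((M : ℝ) * h11 / h21 * W1) = h11 * W1 := by
  have hM1 : (1 : ℝ) < (M : ℝ) := by exact_mod_cast lt_of_lt_of_le one_lt_two (by exact_mod_cast hM)
  have hden : (0 : ℝ) < (M : ℝ) ^ 2 - 1 := by nlinarith
  have hW1pos : 0 < W1 := by rw [hW1]; exact Real.sqrt_pos.mpr (by positivity)
  have hW2pos : 0 < W2 := by rw [hW2]; exact Real.sqrt_pos.mpr (by positivity)
  set w2 : ℝ := (M : ℝ) * h11 / h21 * W1 with hw2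
  have hMpos : (0 : ℝ) < (M : ℝ) := by linarith
  have hw2pos : 0 < w2 := by rw [hw2]; positivity
  have hh21w2 : h21 * w2 = (M : ℝ) * h11 * W1 := by
    rw [hw2]; field_simp
  -- w2 ≤ W2
  have hc : (0 : ℝ) ≤ 3 / ((M : ℝ) ^ 2 - 1) := by positivity
  have hW1' : W1 = Real.sqrt (3 / ((M : ℝ) ^ 2 - 1)) * Real.sqrt p1 := by
    rw [hW1, ← Real.sqrt_mul hc]
    ring_nf
  have hW2' : W2 = Real.sqrt (3 / ((M : ℝ) ^ 2 - 1)) * Real.sqrt p2 := by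
    rw [hW2, ← Real.sqrt_mul hc]
    ring_nf
  have hs1 : 0 < Real.sqrt p1 := Real.sqrt_pos.mpr hp1
  have key : (M : ℝ) * h11 * Real.sqrt p1 ≤ h21 * Real.sqrt p2 := by
    rw [div_le_div_iff₀ h21p (by positivity)] at hratio
    nlinarith [hratio]
  have hw2le : w2 ≤ W2 := by
    rw [hw2, hW1', hW2', div_mul_eq_mul_div, div_le_iff₀ h21p]
    nlinarith [Real.sqrt_nonneg (3 / ((M : ℝ) ^ 2 - 1)), key,
      mul_le_mul_of_nonneg_left key (Real.sqrt_nonneg (3 / ((M : ℝ) ^ 2 - 1)))]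
  -- minDist1 at the point
  have hmin : minDist1 M h11 h21 W1 w2 = h11 * W1 := by
    apply le_antisymm
    · exact minDist1_le M hM h11 h21 W1 w2 (by positivity)
    · apply le_csInf ⟨h11 * W1, mem_dist_set M hM h11 h21 W1 w2 (by positivity)⟩
      rintro d ⟨m, n, hmn, hm, hn, rfl⟩
      have hk : 1 ≤ |n - (M : ℤ) * m| := by
        rcases eq_or_ne m 0 with rfl | hm0
        · have hn0 : n ≠ 0 := by simpa using hmn
          simpa using Int.one_le_abs hn0
        · have h1 : (1 : ℤ) ≤ |m| := Int.one_le_abs hm0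
          have h5 : (M : ℤ) ≤ (M : ℤ) * |m| := le_mul_of_one_le_right (by positivity) h1
          have h2 : |(M : ℤ) * m| = (M : ℤ) * |m| := by
            rw [abs_mul, abs_of_nonneg (by positivity : (0 : ℤ) ≤ (M : ℤ))]
          have h3 := abs_sub_abs_le_abs_sub ((M : ℤ) * m) n
          rw [abs_sub_comm ((M : ℤ) * m) n] at h3
          linarith
      have hkR : (1 : ℝ) ≤ |(n : ℝ) - (M : ℝ) * m| := by
        have : ((1 : ℤ) : ℝ) ≤ ((|n - (M : ℤ) * m| : ℤ) : ℝ) := by exact_mod_cast hk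
        rwa [Int.cast_abs, Int.cast_one, Int.cast_sub, Int.cast_mul, Int.cast_natCast] at this
      calc h11 * W1 = h11 * W1 * 1 := by ring
        _ ≤ h11 * W1 * |(n : ℝ) - (M : ℝ) * m| :=
            mul_le_mul_of_nonneg_left hkR (by positivity)
        _ = |h11 * W1 * ((n : ℝ) - (M : ℝ) * m)| := by
            rw [abs_mul, abs_of_nonneg (by positivity : (0 : ℝ) ≤ h11 * W1)]
        _ = |h11 * W1 * n - h21 * w2 * m| := by rw [hh21w2]; congr 1; ring
  -- f at the point
  have hf : f M h11 h21 h22 W1 w2 = h11 * W1 := by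
    rw [f, hmin, min_eq_left]
    have hle : h21 * w2 ≤ h22 * w2 := mul_le_mul_of_nonneg_right hweak hw2pos.le
    nlinarith [mul_pos h11p hW1pos]
  refine ⟨⟨⟨W1, w2, hW1pos, le_refl W1, hw2pos, hw2le, hf.symm⟩, ?_⟩,
    ⟨hW1pos, le_refl W1, hw2pos, hw2le⟩, hf⟩
  rintro v ⟨u1, u2, hu1p, hu1le, hu2p, hu2le, rfl⟩
  calc f M h11 h21 h22 u1 u2 ≤ minDist1 M h11 h21 u1 u2 := min_le_left _ _
    _ ≤ h11 * u1 := minDist1_le M hM h11 h21 u1 u2 (by positivity)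
    _ ≤ h11 * W1 := mul_le_mul_of_nonneg_left hu1le h11p.le
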